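/- arXiv:1903.01463 — 2 statements merged into one kernel-verified Lean document; each statement's English description precedes it below -/
import Mathlib

section
/- If f : ℝ^d → ℝ is convex and differentiable with L-Lipschitz gradient, and 0 ≤ α ≤ 2/L, then for all y, z ∈ ℝ^d, ‖(y − α∇f(y)) − (z − α∇f(z))‖ ≤ ‖y − z‖; that is, the gradient-descent step with step size at most 2/L is nonexpansive. -/
open Finset MeasureTheory ProbabilityTheory RealInnerProductSpace

noncomputable section

abbrev Vec (d : ℕ) : Type := EuclideanSpace ℝ (Fin d)

/-- The objective `F(x) = (1/n) ∑ i, f(x; i)`. -/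
def avgF {d n : ℕ} (f : Fin n → Vec d → ℝ) : Vec d → ℝ :=
  fun x => (∑ i, f i x) / n

/-- SGDo iterates with constant step size `α`, flattened over epochs:
`σ j` is the permutation used during epoch `j + 1`, and at total step `t`
(the `t % n`-th step of epoch `t / n + 1`) we take a gradient step on the
component selected by the permutation of the current epoch. -/
def sgdoSeq {d n : ℕ} (hn : 0 < n) (f : Fin n → Vec d → ℝ) (α : ℝ)
    (x0 : Vec d) (σ : ℕ → Equiv.Perm (Fin n)) : ℕ → Vec d
  | 0 => x0
  | t + 1 =>
      sgdoSeq hn f α x0 σ t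
        - α • gradient (f (σ (t / n) ⟨t % n, Nat.mod_lt t hn⟩)) (sgdoSeq hn f α x0 σ t)

/-- `x_i^k`, for epoch `k ≥ 1` and within-epoch index `0 ≤ i ≤ n`. -/
def sgdoIter {d n : ℕ} (hn : 0 < n) (f : Fin n → Vec d → ℝ) (α : ℝ)
    (x0 : Vec d) (σ : ℕ → Equiv.Perm (Fin n)) (k i : ℕ) : Vec d :=
  sgdoSeq hn f α x0 σ ((k - 1) * n + i)

/-- Extend a `K`-tuple of permutations to `ℕ` (junk value beyond `K`). -/
def extendPerm {n K : ℕ} (ω : Fin K → Equiv.Perm (Fin n)) : ℕ → Equiv.Perm (Fin n) :=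
  fun j => if h : j < K then ω ⟨j, h⟩ else 1

/-- Expectation of `g` under the uniform distribution on a finite type. -/
def unifExp {Ω : Type*} [Fintype Ω] (g : Ω → ℝ) : ℝ :=
  (∑ ω, g ω) / (Fintype.card Ω)

instance permMeasurableSpace {n : ℕ} : MeasurableSpace (Equiv.Perm (Fin n)) := ⊤

/-- The uniform probability measure on a finite type. -/
def unifMeasure (Ω : Type*) [MeasurableSpace Ω] [Fintype Ω] [Nonempty Ω] : Measure Ω :=
  (PMF.uniformOfFintype Ω).toMeasure

/-- Wasserstein-1 distance between measures on `ℝ^d`, as an infimum over couplings. -/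
def W1dist {d : ℕ} (P Q : Measure (Vec d)) : ℝ :=
  sInf { c | ∃ μ : Measure (Vec d × Vec d), IsProbabilityMeasure μ ∧
    μ.map Prod.fst = P ∧ μ.map Prod.snd = Q ∧ c = ∫ p, ‖p.1 - p.2‖ ∂μ }

/-- Wasserstein-2 distance between measures on `ℝ^d`, as an infimum over couplings. -/
def W2dist {d : ℕ} (P Q : Measure (Vec d)) : ℝ :=
  sInf { c | ∃ μ : Measure (Vec d × Vec d), IsProbabilityMeasure μ ∧
    μ.map Prod.fst = P ∧ μ.map Prod.snd = Q ∧ c = Real.sqrt (∫ p, ‖p.1 - p.2‖ ^ 2 ∂μ) }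

/-!
The gradient of a convex function with `L`-Lipschitz gradient is `1/L`-cocoercive
(Baillon–Haddad): `‖∇f y - ∇f z‖² ≤ L ⟪∇f y - ∇f z, y - z⟫`. Expanding
`‖(y - z) - α (∇f y - ∇f z)‖²` then shows that the cross term `-2α⟪∇f y - ∇f z, y - z⟫`
absorbs `α² ‖∇f y - ∇f z‖²` as soon as `α L ≤ 2`. Cocoercivity comes from sandwiching `f`
between its tangent plane (convexity) and the quadratic upper bound given by the Lipschitz
gradient, evaluated at the point `z - (∇f z - ∇f y) / L`.
-/

section

variable {E : Type*} [NormedAddCommGroup E] [InnerProductSpace ℝ E] [CompleteSpace E]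
  {f : E → ℝ}

theorem DifferentiableAt.hasDerivAt_comp_add_smul {a v : E} {t : ℝ}
    (hf : DifferentiableAt ℝ f (a + t • v)) :
    HasDerivAt (fun s : ℝ => f (a + s • v)) ⟪gradient f (a + t • v), v⟫ t := by
  have hline : HasDerivAt (fun s : ℝ => a + s • v) v t := by
    simpa using ((hasDerivAt_id t).smul_const v).const_add a
  exact hf.hasGradientAt.hasFDerivAt.comp_hasDerivAt t hline

theorem ConvexOn.add_inner_gradient_le (hconv : ConvexOn ℝ Set.univ f) {y : E}
    (hf : DifferentiableAt ℝ f y) (z : E) :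
    f y + ⟪gradient f y, z - y⟫ ≤ f z := by
  have hline : ConvexOn ℝ Set.univ fun t : ℝ => f (y + t • (z - y)) := by
    simpa [Function.comp_def, AffineMap.lineMap_apply_module', add_comm] using
      hconv.comp_affineMap (AffineMap.lineMap y z)
  have hderiv := (show DifferentiableAt ℝ f (y + (0 : ℝ) • (z - y)) by simpa using hf)
    |>.hasDerivAt_comp_add_smul
  rw [zero_smul, add_zero] at hderiv
  have hslope := hline.le_slope_of_hasDerivAt (Set.mem_univ 0) (Set.mem_univ 1) one_pos hderiv
  simp only [slope_def_field, zero_smul, one_smul, add_zero, add_sub_cancel, sub_zero,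
    div_one] at hslope
  linarith

theorem le_add_inner_gradient_add_sq_norm (hf : Differentiable ℝ f) {L : ℝ}
    (hL : ∀ x y, ‖gradient f x - gradient f y‖ ≤ L * ‖x - y‖) (y z : E) :
    f z ≤ f y + ⟪gradient f y, z - y⟫ + L / 2 * ‖z - y‖ ^ 2 := by
  set v := z - y
  let g : ℝ → ℝ := fun t => f (y + t • v) - t * ⟪gradient f y, v⟫ - L / 2 * ‖v‖ ^ 2 * t ^ 2
  have hg (t : ℝ) : HasDerivAt g
      (⟪gradient f (y + t • v), v⟫ - ⟪gradient f y, v⟫ - L * ‖v‖ ^ 2 * t) t := by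
    refine ((((hf _).hasDerivAt_comp_add_smul).sub
      ((hasDerivAt_id t).mul_const _)).sub
        ((hasDerivAt_pow 2 t).const_mul (L / 2 * ‖v‖ ^ 2))).congr_deriv ?_
    ring
  have hg_nonpos {t : ℝ} (ht : 0 ≤ t) :
      ⟪gradient f (y + t • v), v⟫ - ⟪gradient f y, v⟫ - L * ‖v‖ ^ 2 * t ≤ 0 := by
    have hlip : ‖gradient f (y + t • v) - gradient f y‖ ≤ L * (t * ‖v‖) := by
      simpa [norm_smul, abs_of_nonneg ht] using hL (y + t • v) y
    rw [sub_nonpos]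
    calc ⟪gradient f (y + t • v), v⟫ - ⟪gradient f y, v⟫
        = ⟪gradient f (y + t • v) - gradient f y, v⟫ := (inner_sub_left _ _ _).symm
      _ ≤ ‖gradient f (y + t • v) - gradient f y‖ * ‖v‖ := real_inner_le_norm _ _
      _ ≤ L * (t * ‖v‖) * ‖v‖ := by gcongr
      _ = L * ‖v‖ ^ 2 * t := by ring
  have hanti : AntitoneOn g (Set.Ici 0) :=
    antitoneOn_of_hasDerivWithinAt_nonpos (convex_Ici 0)
      (HasDerivAt.continuousOn fun t _ => hg t) (fun t _ => (hg t).hasDerivWithinAt)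
      (fun t ht => hg_nonpos (le_of_lt (by simpa using ht)))
  have hg01 := hanti Set.self_mem_Ici (zero_le_one' ℝ) zero_le_one
  simp only [g, v, zero_smul, add_zero, one_smul, zero_mul, sub_zero, one_mul,
    add_sub_cancel] at hg01
  linarith

theorem ConvexOn.add_inner_gradient_add_sq_norm_gradient_sub_div_le
    (hconv : ConvexOn ℝ Set.univ f) (hf : Differentiable ℝ f) {L : ℝ} (hL0 : 0 < L)
    (hL : ∀ x y, ‖gradient f x - gradient f y‖ ≤ L * ‖x - y‖) (y z : E) :
    f y + ⟪gradient f y, z - y⟫ + ‖gradient f z - gradient f y‖ ^ 2 / (2 * L) ≤ f z := by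
  set Δ := gradient f z - gradient f y
  set w := z - L⁻¹ • Δ
  have hlower := hconv.add_inner_gradient_le (hf y) w
  have hupper := le_add_inner_gradient_add_sq_norm hf hL z w
  have hwy : w - y = (z - y) - L⁻¹ • Δ := by simp only [w]; abel
  have hwz : w - z = -(L⁻¹ • Δ) := by simp only [w]; abel
  rw [hwy, inner_sub_right, real_inner_smul_right] at hlower
  rw [hwz, inner_neg_right, real_inner_smul_right, norm_neg, norm_smul, Real.norm_eq_abs,
    abs_of_pos (inv_pos.mpr hL0)] at hupper
  have hΔ : L⁻¹ * ⟪gradient f z, Δ⟫ - L⁻¹ * ⟪gradient f y, Δ⟫ = L⁻¹ * ‖Δ‖ ^ 2 := by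
    rw [← mul_sub, ← inner_sub_left, real_inner_self_eq_norm_sq]
  have hcoeff : ‖Δ‖ ^ 2 / (2 * L) = L⁻¹ * ‖Δ‖ ^ 2 - L / 2 * (L⁻¹ * ‖Δ‖) ^ 2 := by
    field_simp; ring
  linarith

theorem ConvexOn.sq_norm_gradient_sub_le_mul_inner (hconv : ConvexOn ℝ Set.univ f)
    (hf : Differentiable ℝ f) {L : ℝ} (hL0 : 0 < L)
    (hL : ∀ x y, ‖gradient f x - gradient f y‖ ≤ L * ‖x - y‖) (y z : E) :
    ‖gradient f y - gradient f z‖ ^ 2 ≤ L * ⟪gradient f y - gradient f z, y - z⟫ := by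
  have hyz := hconv.add_inner_gradient_add_sq_norm_gradient_sub_div_le hf hL0 hL y z
  have hzy := hconv.add_inner_gradient_add_sq_norm_gradient_sub_div_le hf hL0 hL z y
  rw [norm_sub_rev] at hyz
  have hinner : ⟪gradient f y - gradient f z, y - z⟫
      = -⟪gradient f y, z - y⟫ - ⟪gradient f z, y - z⟫ := by
    rw [inner_sub_left, ← inner_neg_right, neg_sub]
  have hhalf (a : ℝ) : a / (2 * L) = a / L / 2 := by ring
  rw [← div_le_iff₀' hL0, hinner]
  linarith [hhalf (‖gradient f y - gradient f z‖ ^ 2)]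

end

theorem norm_sub_smul_le_of_sq_norm_le_mul_inner {E : Type*} [NormedAddCommGroup E]
    [InnerProductSpace ℝ E] {u g : E} {L α : ℝ} (hL0 : 0 < L)
    (hg : ‖g‖ ^ 2 ≤ L * ⟪g, u⟫) (hα0 : 0 ≤ α) (hα : α ≤ 2 / L) :
    ‖u - α • g‖ ≤ ‖u‖ := by
  have hinner : 0 ≤ ⟪g, u⟫ := nonneg_of_mul_nonneg_right ((sq_nonneg _).trans hg) hL0
  have hαL : α * L ≤ 2 := (le_div_iff₀ hL0).mp hα
  refine (sq_le_sq₀ (norm_nonneg _) (norm_nonneg _)).mp ?_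
  rw [norm_sub_sq_real, norm_smul, real_inner_smul_right, real_inner_comm, mul_pow,
    Real.norm_eq_abs, sq_abs]
  have hquad : α ^ 2 * ‖g‖ ^ 2 ≤ 2 * (α * ⟪g, u⟫) :=
    calc α ^ 2 * ‖g‖ ^ 2 ≤ α ^ 2 * (L * ⟪g, u⟫) := by gcongr
      _ = α * L * (α * ⟪g, u⟫) := by ring
      _ ≤ 2 * (α * ⟪g, u⟫) := mul_le_mul_of_nonneg_right hαL (mul_nonneg hα0 hinner)
  linarith

/-- **Nonexpansiveness of a gradient step.** If `f` is convex with `L`-Lipschitz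
gradient and `0 ≤ α ≤ 2/L`, the map `x ↦ x − α∇f(x)` is nonexpansive. -/
theorem gradient_step_nonexpansive
    (d : ℕ) (f : Vec d → ℝ) (L α : ℝ)
    (hdiff : Differentiable ℝ f)
    (hconv : ConvexOn ℝ Set.univ f)
    (hL : ∀ x y, ‖gradient f x - gradient f y‖ ≤ L * ‖x - y‖)
    (hα0 : 0 ≤ α) (hα : α ≤ 2 / L) :
    ∀ y z : Vec d,
      ‖(y - α • gradient f y) - (z - α • gradient f z)‖ ≤ ‖y - z‖ := by
  intro y z
  rcases le_or_gt L 0 with hL0 | hL0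
  · have hα_eq : α = 0 :=
      le_antisymm (hα.trans (div_nonpos_of_nonneg_of_nonpos zero_le_two hL0)) hα0
    simp [hα_eq]
  · rw [sub_sub_sub_comm, ← smul_sub]
    exact norm_sub_smul_le_of_sq_norm_le_mul_inner hL0
      (hconv.sq_norm_gradient_sub_le_mul_inner hdiff hL0 hL y z) hα0 hα
end
end

section
/- Suppose the constant step size satisfies α ≤ 2/L. Then for every epoch k, every 0 ≤ i ≤ n−1 and every r ∈ {1,…,n}, W1(D_{i,k}, D_{i,k}^{(r)}) ≤ W2(D_{i,k}, D_{i,k}^{(r)}) ≤ 2αG. -/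
open Finset MeasureTheory ProbabilityTheory RealInnerProductSpace

noncomputable section

open scoped ENNReal

instance permPiMSC {n K : ℕ} : MeasurableSingletonClass (Fin K → Equiv.Perm (Fin n)) := by
  constructor
  intro ω
  have h : ({ω} : Set (Fin K → Equiv.Perm (Fin n))) = ⋂ j, (fun x => x j) ⁻¹' {ω j} := by
    ext x
    simp [funext_iff]
  rw [h]
  exact MeasurableSet.iInter fun j => measurable_pi_apply j MeasurableSpace.measurableSet_top

lemma permPiAll {n K : ℕ} (A : Set (Fin K → Equiv.Perm (Fin n))) : MeasurableSet A :=
  A.to_countable.measurableSet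

variable {d : ℕ}

lemma lineDeriv1 (f : Vec d → ℝ) (hf : Differentiable ℝ f) (x v : Vec d) (t₀ : ℝ) :
    HasDerivAt (fun t : ℝ => f (x + t • v)) ⟪gradient f (x + t₀ • v), v⟫ t₀ := by
  have hc : HasDerivAt (fun t : ℝ => x + t • v) v t₀ := by
    simpa using ((hasDerivAt_id t₀).smul_const v).const_add x
  have hg := (hf (x + t₀ • v)).hasGradientAt
  have h2 := hg.hasFDerivAt.comp_hasDerivAt t₀ hc
  have h3 : HasDerivAt (fun t : ℝ => f (x + t • v)) _ t₀ := h2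
  simpa [InnerProductSpace.toDual_apply_apply] using h3

/-- Convexity gradient inequality. -/
lemma convex_grad_ineq (f : Vec d → ℝ) (hf : Differentiable ℝ f)
    (hc : ConvexOn ℝ Set.univ f) (x y : Vec d) :
    f x + ⟪gradient f x, y - x⟫ ≤ f y := by
  rcases eq_or_ne y x with rfl | hxy
  · simp
  set v := y - x with hv
  have hg : ConvexOn ℝ Set.univ (fun t : ℝ => f (x + t • v)) := by
    have h := hc.comp_affineMap (AffineMap.lineMap x y : ℝ →ᵃ[ℝ] Vec d)
    rw [Set.preimage_univ] at h
    have hfeq : (fun t : ℝ => f (x + t • v)) = f ∘ (AffineMap.lineMap x y : ℝ →ᵃ[ℝ] Vec d) := by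
      funext t
      simp only [Function.comp_apply, AffineMap.lineMap_apply, vsub_eq_sub, vadd_eq_add, hv]
      congr 1
      abel
    rw [hfeq]; exact h
  have hD : HasDerivAt (fun t : ℝ => f (x + t • v)) ⟪gradient f x, v⟫ 0 := by
    simpa using lineDeriv1 f hf x v 0
  have := hg.le_slope_of_hasDerivAt (Set.mem_univ (0:ℝ)) (Set.mem_univ (1:ℝ)) one_pos hD
  rw [slope_def_field] at this
  simp only [zero_smul, add_zero, one_smul] at this
  have h1 : x + v = y := by simp [hv]
  rw [h1] at this
  have : ⟪gradient f x, v⟫ ≤ f y - f x := by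
    simpa [div_eq_mul_inv] using this
  linarith

section B
variable {d : ℕ}
/-- Descent lemma. -/
lemma descent_lemma (f : Vec d → ℝ) (hf : Differentiable ℝ f) (L : ℝ) (hL : 0 < L)
    (hlip : ∀ x y, ‖gradient f x - gradient f y‖ ≤ L * ‖x - y‖) (x y : Vec d) :
    f y ≤ f x + ⟪gradient f x, y - x⟫ + L / 2 * ‖y - x‖ ^ 2 := by
  set v := y - x with hv
  have hgc : Continuous (fun z => gradient f z) := by
    have : LipschitzWith (Real.toNNReal L) (fun z => gradient f z) := by
      apply LipschitzWith.of_dist_le_mul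
      intro a b
      simpa [dist_eq_norm, Real.coe_toNNReal L hL.le] using hlip a b
    exact this.continuous
  set g' : ℝ → ℝ := fun t => ⟪gradient f (x + t • v), v⟫ with hg'
  have hg'c : Continuous g' := by
    apply Continuous.inner
    · exact hgc.comp (by continuity)
    · exact continuous_const
  have hderiv : ∀ t ∈ Set.uIcc (0:ℝ) 1, HasDerivAt (fun t : ℝ => f (x + t • v)) (g' t) t :=
    fun t _ => lineDeriv1 f hf x v t
  have hint : IntervalIntegrable g' MeasureTheory.volume 0 1 := hg'c.intervalIntegrable 0 1
  have hftc : (∫ t in (0:ℝ)..1, g' t) = f (x + (1:ℝ) • v) - f (x + (0:ℝ) • v) :=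
    intervalIntegral.integral_eq_sub_of_hasDerivAt hderiv hint
  have hbound : ∀ t ∈ Set.Icc (0:ℝ) 1, g' t ≤ g' 0 + L * ‖v‖ ^ 2 * t := by
    intro t ht
    have h1 : g' t - g' 0 = ⟪gradient f (x + t • v) - gradient f x, v⟫ := by
      simp [hg', inner_sub_left]
    have h2 : ⟪gradient f (x + t • v) - gradient f x, v⟫ ≤ L * t * ‖v‖ ^ 2 := by
      calc ⟪gradient f (x + t • v) - gradient f x, v⟫
          ≤ ‖gradient f (x + t • v) - gradient f x‖ * ‖v‖ := real_inner_le_norm _ _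
        _ ≤ (L * ‖(x + t • v) - x‖) * ‖v‖ := by
            apply mul_le_mul_of_nonneg_right (hlip _ _) (norm_nonneg _)
        _ = L * t * ‖v‖ ^ 2 := by
            have : ‖(x + t • v) - x‖ = t * ‖v‖ := by
              simp [norm_smul, abs_of_nonneg ht.1]
            rw [this]; ring
    nlinarith [h1, h2]
  have hmono : (∫ t in (0:ℝ)..1, g' t) ≤ ∫ t in (0:ℝ)..1, (g' 0 + L * ‖v‖ ^ 2 * t) := by
    apply intervalIntegral.integral_mono_on zero_le_one hint
    · exact ((continuous_const.add (continuous_const.mul continuous_id')).intervalIntegrable 0 1)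
    · exact hbound
  have hval : (∫ t in (0:ℝ)..1, (g' 0 + L * ‖v‖ ^ 2 * t)) = g' 0 + L / 2 * ‖v‖ ^ 2 := by
    rw [intervalIntegral.integral_add (intervalIntegrable_const)
      ((Continuous.intervalIntegrable (show Continuous fun t : ℝ => L * ‖v‖ ^ 2 * t from continuous_const.mul continuous_id') 0 1))]
    rw [intervalIntegral.integral_const, intervalIntegral.integral_const_mul,
      integral_id]
    norm_num
    ring
  have : f y - f x ≤ g' 0 + L / 2 * ‖v‖ ^ 2 := by
    rw [← hval]
    have : f (x + (1:ℝ) • v) = f y := by simp [hv]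
    have h0 : f (x + (0:ℝ) • v) = f x := by simp
    calc f y - f x = ∫ t in (0:ℝ)..1, g' t := by rw [hftc, this, h0]
      _ ≤ _ := hmono
  have hg0 : g' 0 = ⟪gradient f x, y - x⟫ := by
    show ⟪gradient f (x + (0:ℝ) • v), v⟫ = ⟪gradient f x, y - x⟫
    rw [zero_smul, add_zero, hv]
  linarith [this, hg0.le, hg0.ge]
end B
section C
variable {d : ℕ}

lemma cocoercive (f : Vec d → ℝ) (hf : Differentiable ℝ f)
    (hc : ConvexOn ℝ Set.univ f) (L : ℝ) (hL : 0 < L)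
    (hlip : ∀ x y, ‖gradient f x - gradient f y‖ ≤ L * ‖x - y‖) (x y : Vec d) :
    ‖gradient f x - gradient f y‖ ^ 2 ≤ L * ⟪gradient f x - gradient f y, x - y⟫ := by
  -- key half-inequality, for any x y
  have key : ∀ x y : Vec d,
      f x + ⟪gradient f x, y - x⟫ + L⁻¹ / 2 * ‖gradient f y - gradient f x‖ ^ 2 ≤ f y := by
    intro x y
    set b := gradient f x with hb
    set z := y - (L⁻¹) • (gradient f y - b) with hz
    -- convexity of φ w = f w - ⟪b, w⟫ at x, minimized at x
    have hA := convex_grad_ineq f hf hc x z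
    -- rewrite: f x + ⟪b, z - x⟫ ≤ f z
    -- descent for φ: f z - ⟪b,z⟫ ≤ f y - ⟪b,y⟫ + ⟪∇f y - b, z - y⟫ + L/2 ‖z-y‖²
    have hB := descent_lemma f hf L hL hlip y z
    -- combine
    have hzy : z - y = -(L⁻¹) • (gradient f y - b) := by rw [hz]; module
    have h1 : ⟪gradient f y, z - y⟫ = -(L⁻¹) * ⟪gradient f y, gradient f y - b⟫ := by
      rw [hzy, real_inner_smul_right]
    have h2 : ‖z - y‖ ^ 2 = L⁻¹ ^ 2 * ‖gradient f y - b‖ ^ 2 := by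
      rw [hzy, norm_smul]
      simp [abs_of_nonneg (inv_nonneg.mpr hL.le), mul_pow]
    have h3 : ⟪b, z - x⟫ = ⟪b, y - x⟫ - L⁻¹ * ⟪b, gradient f y - b⟫ := by
      have : z - x = (y - x) + (-(L⁻¹) • (gradient f y - b)) := by rw [hz]; module
      rw [this, inner_add_right, real_inner_smul_right]; ring
    have h4 : ⟪gradient f y, gradient f y - b⟫ - ⟪b, gradient f y - b⟫
        = ‖gradient f y - b‖ ^ 2 := by
      rw [← inner_sub_left, real_inner_self_eq_norm_sq]
    have hLinv : L⁻¹ > 0 := inv_pos.mpr hL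
    rw [← hb] at hA
    rw [h1, h2] at hB
    have h6 : L / 2 * (L⁻¹ ^ 2 * ‖gradient f y - b‖ ^ 2) = L⁻¹ / 2 * ‖gradient f y - b‖ ^ 2 := by
      field_simp
    rw [h6] at hB
    have h5 : L⁻¹ * ⟪gradient f y, gradient f y - b⟫ - L⁻¹ * ⟪b, gradient f y - b⟫
        = L⁻¹ * ‖gradient f y - b‖ ^ 2 := by linear_combination L⁻¹ * h4
    linarith [hA, hB, h3, h5]
  have k1 := key x y
  have k2 := key y x
  have hsymm : ‖gradient f x - gradient f y‖ = ‖gradient f y - gradient f x‖ := by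
    rw [norm_sub_rev]
  have hio : ⟪gradient f x, y - x⟫ + ⟪gradient f y, x - y⟫
      = -⟪gradient f x - gradient f y, x - y⟫ := by
    rw [inner_sub_left]
    have : ⟪gradient f x, y - x⟫ = -⟪gradient f x, x - y⟫ := by
      rw [← inner_neg_right]; congr 1; abel
    rw [this]; ring
  have hL2 : 0 < 2 * L := by linarith
  have := add_le_add k1 k2
  rw [hsymm] at this
  have hineq : 2 * (L⁻¹ / 2) * ‖gradient f y - gradient f x‖ ^ 2
      ≤ ⟪gradient f x - gradient f y, x - y⟫ := by nlinarith [this, hio]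
  rw [hsymm]
  have : L⁻¹ * ‖gradient f y - gradient f x‖ ^ 2 ≤ ⟪gradient f x - gradient f y, x - y⟫ := by
    have h2l : 2 * (L⁻¹ / 2) = L⁻¹ := by ring
    rwa [h2l] at hineq
  calc ‖gradient f y - gradient f x‖ ^ 2 = L * (L⁻¹ * ‖gradient f y - gradient f x‖ ^ 2) := by
        field_simp
    _ ≤ L * ⟪gradient f x - gradient f y, x - y⟫ := by
        exact mul_le_mul_of_nonneg_left this hL.le

lemma nonexpansive_step (f : Vec d → ℝ) (hf : Differentiable ℝ f)
    (hc : ConvexOn ℝ Set.univ f) (L α : ℝ) (hL : 0 < L) (hα : 0 < α) (hα2 : α ≤ 2 / L)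
    (hlip : ∀ x y, ‖gradient f x - gradient f y‖ ≤ L * ‖x - y‖) (x y : Vec d) :
    ‖(x - α • gradient f x) - (y - α • gradient f y)‖ ≤ ‖x - y‖ := by
  set Δ := gradient f x - gradient f y with hΔ
  have hco := cocoercive f hf hc L hL hlip x y
  have hrw : (x - α • gradient f x) - (y - α • gradient f y) = (x - y) - α • Δ := by
    rw [hΔ]; module
  have hsq : ‖(x - y) - α • Δ‖ ^ 2 ≤ ‖x - y‖ ^ 2 := by
    rw [norm_sub_sq_real, real_inner_smul_right, norm_smul]
    simp only [Real.norm_eq_abs, abs_of_nonneg hα.le, mul_pow]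
    have hcoL : α * ⟪x - y, Δ⟫ ≥ α * (L⁻¹ * ‖Δ‖ ^ 2) := by
      apply mul_le_mul_of_nonneg_left _ hα.le
      rw [real_inner_comm]
      calc L⁻¹ * ‖Δ‖ ^ 2 ≤ L⁻¹ * (L * ⟪Δ, x - y⟫) :=
            mul_le_mul_of_nonneg_left hco (inv_nonneg.mpr hL.le)
        _ = ⟪Δ, x - y⟫ := by field_simp
    have hα2' : α * α ≤ α * (2 / L) := mul_le_mul_of_nonneg_left hα2 hα.le
    have h9 : α ^ 2 * ‖Δ‖ ^ 2 ≤ α * (2 / L) * ‖Δ‖ ^ 2 := by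
      apply mul_le_mul_of_nonneg_right _ (sq_nonneg ‖Δ‖)
      rw [sq]; exact hα2'
    have h10 : α * (2 / L) * ‖Δ‖ ^ 2 = 2 * (α * (L⁻¹ * ‖Δ‖ ^ 2)) := by
      field_simp
    linarith [hcoL, h9, h10]
  calc ‖(x - α • gradient f x) - (y - α • gradient f y)‖ = ‖(x - y) - α • Δ‖ := by rw [hrw]
    _ ≤ ‖x - y‖ := by
        nlinarith [norm_nonneg ((x - y) - α • Δ), norm_nonneg (x - y), hsq]
end C
section Traj

variable {d n : ℕ}

lemma sgdo_prefix_eq (hn : 0 < n) (f : Fin n → Vec d → ℝ) (α : ℝ) (x0 : Vec d)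
    (σ σ' : ℕ → Equiv.Perm (Fin n)) (k0 : ℕ) (hagree : ∀ j, j ≠ k0 → σ j = σ' j) :
    ∀ t, t ≤ k0 * n → sgdoSeq hn f α x0 σ t = sgdoSeq hn f α x0 σ' t := by
  intro t
  induction t with
  | zero => intro _; rfl
  | succ t ih =>
    intro ht
    have ht' : t < k0 * n := by omega
    have hdiv : t / n < k0 := (Nat.div_lt_iff_lt_mul hn).mpr ht'
    have heq := ih (le_of_lt ht')
    show sgdoSeq hn f α x0 σ t - _ = sgdoSeq hn f α x0 σ' t - _
    rw [heq, hagree (t / n) (by omega)]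

lemma sgdo_epoch_coupling (hn : 0 < n) (f : Fin n → Vec d → ℝ) (G L α : ℝ) (x0 : Vec d)
    (hα : 0 < α) (hα2 : α ≤ 2 / L) (hL : 0 < L) (hG : 0 ≤ G)
    (hdiff : ∀ i, Differentiable ℝ (f i))
    (hconv : ∀ i, ConvexOn ℝ Set.univ (f i))
    (hGlip : ∀ i x, ‖gradient (f i) x‖ ≤ G)
    (hLsmooth : ∀ i x y, ‖gradient (f i) x - gradient (f i) y‖ ≤ L * ‖x - y‖)
    (σ σ' : ℕ → Equiv.Perm (Fin n)) (k0 : ℕ) (hagree : ∀ j', j' ≠ k0 → σ j' = σ' j')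
    (i j : Fin n) (hσ' : σ' k0 = σ k0 * Equiv.swap i j) :
    ∀ m, m ≤ (i : ℕ) →
      ‖sgdoSeq hn f α x0 σ (k0 * n + m) - sgdoSeq hn f α x0 σ' (k0 * n + m)‖ ≤ 2 * α * G
      ∧ (m ≤ (j : ℕ) → sgdoSeq hn f α x0 σ (k0 * n + m) = sgdoSeq hn f α x0 σ' (k0 * n + m)) := by
  intro m
  induction m with
  | zero =>
    intro _
    have h0 := sgdo_prefix_eq hn f α x0 σ σ' k0 hagree (k0 * n) le_rfl
    rw [Nat.add_zero, h0]
    exact ⟨by simp; positivity, fun _ => rfl⟩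
  | succ m ih =>
    intro hm
    have hmi : m < (i : ℕ) := by omega
    have hmn : m < n := lt_of_lt_of_le hmi (Nat.le_of_lt_succ (Nat.lt_succ_of_lt i.isLt))
    obtain ⟨ihnorm, iheq⟩ := ih (by omega)
    -- the step at time t = k0 * n + m
    set t := k0 * n + m with htdef
    have hdiv : t / n = k0 := by
      rw [htdef, Nat.mul_comm, Nat.mul_add_div hn, Nat.div_eq_of_lt hmn, Nat.add_zero]
    have hmod : t % n = m := by
      rw [htdef, Nat.mul_comm, Nat.mul_add_mod, Nat.mod_eq_of_lt hmn]
    have hfin : (⟨t % n, Nat.mod_lt t hn⟩ : Fin n) = ⟨m, hmn⟩ := by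
      apply Fin.ext; simp [hmod]
    have hstepA : sgdoSeq hn f α x0 σ (t + 1) =
        sgdoSeq hn f α x0 σ t - α • gradient (f (σ k0 ⟨m, hmn⟩)) (sgdoSeq hn f α x0 σ t) := by
      show sgdoSeq hn f α x0 σ t - _ = _
      rw [hdiv, hfin]
    have hstepB : sgdoSeq hn f α x0 σ' (t + 1) =
        sgdoSeq hn f α x0 σ' t
          - α • gradient (f (σ' k0 ⟨m, hmn⟩)) (sgdoSeq hn f α x0 σ' t) := by
      show sgdoSeq hn f α x0 σ' t - _ = _
      rw [hdiv, hfin]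
    have htsucc : k0 * n + (m + 1) = t + 1 := by omega
    rw [htsucc]
    by_cases hcase : (⟨m, hmn⟩ : Fin n) = j
    · -- m = j : divergence step
      have hmj : m = (j : ℕ) := by rw [← hcase]
      have heq := iheq (by omega)
      have hcomp : σ' k0 ⟨m, hmn⟩ = σ k0 i := by
        rw [hσ', Equiv.Perm.mul_apply, hcase, Equiv.swap_apply_right]
      rw [hstepA, hstepB, heq, hcomp]
      constructor
      · set z := sgdoSeq hn f α x0 σ' t
        have : z - α • gradient (f (σ k0 ⟨m, hmn⟩)) z - (z - α • gradient (f (σ k0 i)) z)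
            = α • (gradient (f (σ k0 i)) z - gradient (f (σ k0 ⟨m, hmn⟩)) z) := by module
        rw [this, norm_smul]
        simp only [Real.norm_eq_abs, abs_of_nonneg hα.le]
        calc α * ‖gradient (f (σ k0 i)) z - gradient (f (σ k0 ⟨m, hmn⟩)) z‖
            ≤ α * (‖gradient (f (σ k0 i)) z‖ + ‖gradient (f (σ k0 ⟨m, hmn⟩)) z‖) := by
              apply mul_le_mul_of_nonneg_left (norm_sub_le _ _) hα.le
          _ ≤ α * (G + G) := by
              apply mul_le_mul_of_nonneg_left (add_le_add (hGlip _ _) (hGlip _ _)) hα.le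
          _ = 2 * α * G := by ring
      · intro h; omega
    · -- m ≠ j
      have hmi' : (⟨m, hmn⟩ : Fin n) ≠ i := by
        intro h
        have : m = (i : ℕ) := by rw [← h]
        omega
      have hcomp : σ' k0 ⟨m, hmn⟩ = σ k0 ⟨m, hmn⟩ := by
        rw [hσ', Equiv.Perm.mul_apply, Equiv.swap_apply_of_ne_of_ne hmi' hcase]
      by_cases hmj : m < (j : ℕ)
      · -- equality phase
        have heq := iheq (by omega)
        rw [hstepA, hstepB, heq, hcomp]
        refine ⟨by simp; positivity, fun _ => rfl⟩
      · -- contraction phase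
        rw [hstepA, hstepB, hcomp]
        set c := σ k0 ⟨m, hmn⟩
        constructor
        · calc ‖(sgdoSeq hn f α x0 σ t - α • gradient (f c) (sgdoSeq hn f α x0 σ t))
              - (sgdoSeq hn f α x0 σ' t - α • gradient (f c) (sgdoSeq hn f α x0 σ' t))‖
              ≤ ‖sgdoSeq hn f α x0 σ t - sgdoSeq hn f α x0 σ' t‖ :=
                nonexpansive_step (f c) (hdiff c) (hconv c) L α hL hα hα2
                  (fun a b => hLsmooth c a b) _ _
            _ ≤ 2 * α * G := ihnorm
        · intro h; omega
end Traj

section Meas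
variable {Ω : Type*} [Fintype Ω] [Nonempty Ω] [MeasurableSpace Ω] [MeasurableSingletonClass Ω]

lemma unifMeasure_apply (B : Set Ω) :
    unifMeasure Ω B = (Nat.card B : ℝ≥0∞) * (Fintype.card Ω : ℝ≥0∞)⁻¹ := by
  classical
  rw [unifMeasure, PMF.toMeasure_apply_fintype]
  simp only [PMF.uniformOfFintype_apply, Set.indicator_apply]
  rw [Finset.sum_ite, Finset.sum_const, Finset.sum_const_zero, add_zero, nsmul_eq_mul]
  congr 1
  simp [Nat.card_eq_fintype_card, Fintype.card_subtype]

instance : IsProbabilityMeasure (unifMeasure Ω) := by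
  rw [unifMeasure]; infer_instance

/-- If `T` realizes an `N`-to-1 cover of `s`, then pushing the uniform measure forward
along `T` gives the uniform measure conditioned on `s`. -/
lemma map_unif_eq_cond (hall : ∀ A : Set Ω, MeasurableSet A) (T : Ω → Ω) (s : Set Ω)
    (N : ℕ) (hN : 0 < N) (e : Ω ≃ (Fin N × s)) (he : ∀ ω, ((e ω).2 : Ω) = T ω) :
    (unifMeasure Ω).map T = ProbabilityTheory.cond (unifMeasure Ω) s := by
  classical
  have hT : Measurable T := fun A _ => hall _
  have hcardΩ : Fintype.card Ω = N * Nat.card s := by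
    rw [Fintype.card_congr e, Fintype.card_prod, Fintype.card_fin, Nat.card_eq_fintype_card]
  have hsne : Nat.card s ≠ 0 := by
    intro h0
    have h := Fintype.card_pos (α := Ω)
    rw [hcardΩ, h0, Nat.mul_zero] at h
    exact lt_irrefl 0 h
  apply Measure.ext
  intro A hA
  rw [Measure.map_apply hT hA, ProbabilityTheory.cond_apply (hall s),
    unifMeasure_apply, unifMeasure_apply, unifMeasure_apply]
  -- counting: Nat.card (T ⁻¹' A) = N * Nat.card (s ∩ A)
  have hcount : Nat.card (T ⁻¹' A) = N * Nat.card ↥(s ∩ A) := by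
    have e1 : ↥(T ⁻¹' A) ≃ {p : Fin N × s // (p.2 : Ω) ∈ A} := by
      refine e.subtypeEquiv fun ω => ?_
      rw [Set.mem_preimage, ← he ω]
    have e2 : {p : Fin N × s // (p.2 : Ω) ∈ A} ≃ Fin N × {ω' : s // (ω' : Ω) ∈ A} :=
      ⟨fun q => (q.1.1, ⟨q.1.2, q.2⟩), fun p => ⟨(p.1, p.2.1), p.2.2⟩,
        fun q => rfl, fun p => rfl⟩
    have e3 : {ω' : s // (ω' : Ω) ∈ A} ≃ ↥(s ∩ A) :=
      ⟨fun q => ⟨q.1.1, q.1.2, q.2⟩, fun p => ⟨⟨p.1, p.2.1⟩, p.2.2⟩,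
        fun q => rfl, fun p => rfl⟩
    calc Nat.card (T ⁻¹' A) = Nat.card (Fin N × {ω' : s // (ω' : Ω) ∈ A}) :=
          Nat.card_congr ((e1.trans e2))
      _ = N * Nat.card ↥(s ∩ A) := by
          rw [Nat.card_prod, Nat.card_eq_fintype_card (α := Fin N), Fintype.card_fin,
            Nat.card_congr e3]
  rw [hcount, hcardΩ]
  -- pure ℝ≥0∞ arithmetic
  set a : ℝ≥0∞ := (Nat.card ↥(s ∩ A) : ℝ≥0∞)
  set b : ℝ≥0∞ := (Nat.card ↥s : ℝ≥0∞)
  set N' : ℝ≥0∞ := (N : ℝ≥0∞)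
  have hb0 : b ≠ 0 := by simpa [b] using hsne
  have hbt : b ≠ ⊤ := by simp [b]
  have hN0 : N' ≠ 0 := by simpa [N'] using hN.ne'
  have hNt : N' ≠ ⊤ := by simp [N']
  have hcast : ((N * Nat.card ↥s : ℕ) : ℝ≥0∞) = N' * b := by push_cast; rfl
  rw [hcast]
  have hmi : (N' * b)⁻¹ = N'⁻¹ * b⁻¹ := ENNReal.mul_inv (Or.inl hN0) (Or.inl hNt)
  rw [hmi]
  have h1 : b * (N'⁻¹ * b⁻¹) = N'⁻¹ := by
    rw [mul_comm N'⁻¹ b⁻¹, ← mul_assoc, mul_comm b b⁻¹, ENNReal.inv_mul_cancel hb0 hbt, one_mul]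
  have h2 : (b * (N'⁻¹ * b⁻¹))⁻¹ = N' := by rw [h1, inv_inv]
  calc (N * Nat.card ↥(s ∩ A) : ℕ) * (N'⁻¹ * b⁻¹)
      = N' * a * (N'⁻¹ * b⁻¹) := by push_cast; rfl
    _ = (b * (N'⁻¹ * b⁻¹))⁻¹ * (a * (N'⁻¹ * b⁻¹)) := by rw [h2]; ring

end Meas

section W
variable {d : ℕ}

lemma wasserstein_bounds (P Q : Measure (Vec d)) (F : Set (Vec d)) (hFfin : F.Finite)
    (hP : P Fᶜ = 0) (hQ : Q Fᶜ = 0)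
    (μ0 : Measure (Vec d × Vec d)) (h0 : IsProbabilityMeasure μ0)
    (hm1 : μ0.map Prod.fst = P) (hm2 : μ0.map Prod.snd = Q)
    (C : ℝ) (hC : 0 ≤ C) (hbd : ∀ᵐ p ∂μ0, ‖p.1 - p.2‖ ≤ C) :
    W1dist P Q ≤ W2dist P Q ∧ W2dist P Q ≤ C := by
  classical
  set g : Vec d × Vec d → ℝ := fun p => ‖p.1 - p.2‖ with hg
  have hgc : Continuous g := (continuous_fst.sub continuous_snd).norm
  have hgnn : ∀ p, 0 ≤ g p := fun p => norm_nonneg _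
  -- the norm bound over F
  obtain ⟨M, hM⟩ : ∃ M, ∀ x ∈ F, ‖x‖ ≤ M := by
    obtain ⟨M, hub⟩ := (hFfin.image norm).bddAbove
    exact ⟨M, fun x hx => hub ⟨x, hx, rfl⟩⟩
  -- any coupling of P and Q is a.e. bounded
  have hae : ∀ (ν : Measure (Vec d × Vec d)), IsProbabilityMeasure ν →
      ν.map Prod.fst = P → ν.map Prod.snd = Q → ∀ᵐ p ∂ν, ‖g p‖ ≤ M + M := by
    intro ν hν hν1 hν2
    have hFc : MeasurableSet Fᶜ := hFfin.measurableSet.compl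
    have h1 : ν {p | p.1 ∈ Fᶜ} = 0 := by
      have : {p : Vec d × Vec d | p.1 ∈ Fᶜ} = Prod.fst ⁻¹' Fᶜ := rfl
      rw [this, ← Measure.map_apply measurable_fst hFc, hν1, hP]
    have h2 : ν {p | p.2 ∈ Fᶜ} = 0 := by
      have : {p : Vec d × Vec d | p.2 ∈ Fᶜ} = Prod.snd ⁻¹' Fᶜ := rfl
      rw [this, ← Measure.map_apply measurable_snd hFc, hν2, hQ]
    have hae1 : ∀ᵐ p ∂ν, p.1 ∈ F := by
      rw [MeasureTheory.ae_iff]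
      convert h1 using 2
      rfl
    have hae2 : ∀ᵐ p ∂ν, p.2 ∈ F := by
      rw [MeasureTheory.ae_iff]
      convert h2 using 2
      rfl
    filter_upwards [hae1, hae2] with p hp1 hp2
    rw [Real.norm_of_nonneg (hgnn p)]
    calc g p ≤ ‖p.1‖ + ‖p.2‖ := norm_sub_le _ _
      _ ≤ M + M := add_le_add (hM _ hp1) (hM _ hp2)
  -- `∫ g ≤ √(∫ g²)` for any coupling
  have hkey : ∀ (ν : Measure (Vec d × Vec d)), IsProbabilityMeasure ν →
      ν.map Prod.fst = P → ν.map Prod.snd = Q →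
      (∫ p, g p ∂ν) ≤ Real.sqrt (∫ p, g p ^ 2 ∂ν) := by
    intro ν hν hν1 hν2
    haveI := hν
    have hmem : MemLp g 2 ν :=
      MemLp.of_bound (hgc.aestronglyMeasurable) (M + M) (hae ν hν hν1 hν2)
    have hvar := ProbabilityTheory.variance_nonneg g ν
    rw [ProbabilityTheory.variance_eq_sub hmem] at hvar
    apply Real.le_sqrt_of_sq_le
    have : (∫ p, (g ^ 2) p ∂ν) = ∫ p, g p ^ 2 ∂ν := by
      congr 1
    linarith [hvar, this]
  -- bounded below
  have hbdd1 : BddBelow { c | ∃ μ : Measure (Vec d × Vec d), IsProbabilityMeasure μ ∧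
      μ.map Prod.fst = P ∧ μ.map Prod.snd = Q ∧ c = ∫ p, ‖p.1 - p.2‖ ∂μ } := by
    refine ⟨0, fun c hc => ?_⟩
    obtain ⟨ν, hν, _, _, rfl⟩ := hc
    exact integral_nonneg hgnn
  have hbdd2 : BddBelow { c | ∃ μ : Measure (Vec d × Vec d), IsProbabilityMeasure μ ∧
      μ.map Prod.fst = P ∧ μ.map Prod.snd = Q ∧ c = Real.sqrt (∫ p, ‖p.1 - p.2‖ ^ 2 ∂μ) } := by
    refine ⟨0, fun c hc => ?_⟩
    obtain ⟨ν, hν, _, _, rfl⟩ := hc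
    exact Real.sqrt_nonneg _
  have hmem2 : Real.sqrt (∫ p, ‖p.1 - p.2‖ ^ 2 ∂μ0) ∈ { c | ∃ μ : Measure (Vec d × Vec d),
      IsProbabilityMeasure μ ∧ μ.map Prod.fst = P ∧ μ.map Prod.snd = Q ∧
      c = Real.sqrt (∫ p, ‖p.1 - p.2‖ ^ 2 ∂μ) } := ⟨μ0, h0, hm1, hm2, rfl⟩
  have hne2 : Set.Nonempty { c | ∃ μ : Measure (Vec d × Vec d),
      IsProbabilityMeasure μ ∧ μ.map Prod.fst = P ∧ μ.map Prod.snd = Q ∧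
      c = Real.sqrt (∫ p, ‖p.1 - p.2‖ ^ 2 ∂μ) } := ⟨_, hmem2⟩
  constructor
  · -- W1 ≤ W2
    rw [W1dist, W2dist]
    apply le_csInf hne2
    intro c hc
    obtain ⟨ν, hν, hν1, hν2, rfl⟩ := hc
    calc sInf _ ≤ ∫ p, ‖p.1 - p.2‖ ∂ν := csInf_le hbdd1 ⟨ν, hν, hν1, hν2, rfl⟩
      _ ≤ Real.sqrt (∫ p, ‖p.1 - p.2‖ ^ 2 ∂ν) := hkey ν hν hν1 hν2
  · -- W2 ≤ C
    rw [W2dist]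
    apply le_trans (csInf_le hbdd2 hmem2)
    haveI := h0
    have hint : Integrable (fun p => g p ^ 2) μ0 := by
      rw [← memLp_one_iff_integrable]
      apply MemLp.of_bound ((hgc.pow 2).aestronglyMeasurable) (C ^ 2)
      filter_upwards [hbd] with p hp
      rw [Pi.pow_apply, Real.norm_of_nonneg (sq_nonneg _)]
      exact pow_le_pow_left₀ (hgnn p) hp 2
    have hle : (∫ p, ‖p.1 - p.2‖ ^ 2 ∂μ0) ≤ C ^ 2 := by
      have := integral_mono_ae hint (integrable_const (C ^ 2)) ?_
      · simpa using this
      · filter_upwards [hbd] with p hp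
        exact pow_le_pow_left₀ (hgnn p) hp 2
    calc Real.sqrt (∫ p, ‖p.1 - p.2‖ ^ 2 ∂μ0) ≤ Real.sqrt (C ^ 2) := Real.sqrt_le_sqrt hle
      _ = C := Real.sqrt_sq hC
end W

/-- **Lemma 5 (Wasserstein coupling bound).** If `α ≤ 2/L`, then for all `k`, `i`, `r`:
`W1(D_(i,k), D_(i,k)^(r)) ≤ W2(D_(i,k), D_(i,k)^(r)) ≤ 2αG`. -/
theorem wasserstein_coupling_bound
    (d n K : ℕ) (hn : 0 < n) (hK : 0 < K)
    (f : Fin n → Vec d → ℝ) (G L α : ℝ) (x0 : Vec d)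
    (hα : 0 < α) (hα2 : α ≤ 2 / L)
    (hdiff : ∀ i, Differentiable ℝ (f i))
    (hconv : ∀ i, ConvexOn ℝ Set.univ (f i))
    (hGlip : ∀ i x, ‖gradient (f i) x‖ ≤ G)
    (hLsmooth : ∀ i x y, ‖gradient (f i) x - gradient (f i) y‖ ≤ L * ‖x - y‖)
    (k : ℕ) (hk1 : 1 ≤ k) (hkK : k ≤ K) (i r : Fin n) :
    W1dist
        (Measure.map (fun ω : Fin K → Equiv.Perm (Fin n) => sgdoIter hn f α x0 (extendPerm ω) k (i : ℕ))
          (unifMeasure (Fin K → Equiv.Perm (Fin n))))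
        (Measure.map (fun ω : Fin K → Equiv.Perm (Fin n) => sgdoIter hn f α x0 (extendPerm ω) k (i : ℕ))
          (ProbabilityTheory.cond (unifMeasure (Fin K → Equiv.Perm (Fin n)))
            {ω | extendPerm ω (k - 1) i = r}))
      ≤ W2dist
        (Measure.map (fun ω : Fin K → Equiv.Perm (Fin n) => sgdoIter hn f α x0 (extendPerm ω) k (i : ℕ))
          (unifMeasure (Fin K → Equiv.Perm (Fin n))))
        (Measure.map (fun ω : Fin K → Equiv.Perm (Fin n) => sgdoIter hn f α x0 (extendPerm ω) k (i : ℕ))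
          (ProbabilityTheory.cond (unifMeasure (Fin K → Equiv.Perm (Fin n)))
            {ω | extendPerm ω (k - 1) i = r}))
    ∧ W2dist
        (Measure.map (fun ω : Fin K → Equiv.Perm (Fin n) => sgdoIter hn f α x0 (extendPerm ω) k (i : ℕ))
          (unifMeasure (Fin K → Equiv.Perm (Fin n))))
        (Measure.map (fun ω : Fin K → Equiv.Perm (Fin n) => sgdoIter hn f α x0 (extendPerm ω) k (i : ℕ))
          (ProbabilityTheory.cond (unifMeasure (Fin K → Equiv.Perm (Fin n)))
            {ω | extendPerm ω (k - 1) i = r}))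
      ≤ 2 * α * G := by
  classical
  have hkK' : k - 1 < K := by omega
  have hL : 0 < L := by
    by_contra hle
    push_neg at hle
    have h2 : 2 / L ≤ 0 := div_nonpos_iff.mpr (Or.inl ⟨by norm_num, hle⟩)
    linarith
  have hG : 0 ≤ G := le_trans (norm_nonneg _) (hGlip i x0)
  set k₀ : Fin K := ⟨k - 1, hkK'⟩ with hk₀
  set T : (Fin K → Equiv.Perm (Fin n)) → (Fin K → Equiv.Perm (Fin n)) :=
    fun ω => Function.update ω k₀ (ω k₀ * Equiv.swap i ((ω k₀)⁻¹ r)) with hT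
  set s : Set (Fin K → Equiv.Perm (Fin n)) := {ω | ω k₀ i = r} with hs
  have hsrw : {ω : Fin K → Equiv.Perm (Fin n) | extendPerm ω (k - 1) i = r} = s := by
    ext ω
    simp only [Set.mem_setOf_eq, extendPerm, hs]
    rw [dif_pos hkK']
  set X : (Fin K → Equiv.Perm (Fin n)) → Vec d :=
    fun ω => sgdoIter hn f α x0 (extendPerm ω) k (i : ℕ) with hX
  have hall := fun A => permPiAll (n := n) (K := K) A
  have hXm : Measurable X := fun _ _ => hall _
  have hTm : Measurable T := fun _ _ => hall _
  -- basic permutation facts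
  have hTk₀ : ∀ ω, T ω k₀ = ω k₀ * Equiv.swap i ((ω k₀)⁻¹ r) := fun ω =>
    Function.update_self _ _ _
  have hTmem : ∀ ω, T ω ∈ s := by
    intro ω
    show T ω k₀ i = r
    rw [hTk₀, Equiv.Perm.mul_apply, Equiv.swap_apply_left]
    exact (Equiv.eq_symm_apply _).mp rfl
  -- the n-to-1 structure of T over s
  set e : (Fin K → Equiv.Perm (Fin n)) ≃ (Fin n × s) :=
    { toFun := fun ω => ((ω k₀)⁻¹ r, ⟨T ω, hTmem ω⟩)
      invFun := fun p => Function.update (p.2 : Fin K → Equiv.Perm (Fin n)) k₀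
        ((p.2 : Fin K → Equiv.Perm (Fin n)) k₀ * Equiv.swap i p.1)
      left_inv := by
        intro ω
        simp only
        rw [hTk₀]
        rw [hT]
        simp only
        rw [Function.update_idem, mul_assoc, Equiv.swap_mul_self, mul_one,
          Function.update_eq_self]
      right_inv := by
        rintro ⟨j, ⟨ω', hω'⟩⟩
        have hω'i : (ω' k₀)⁻¹ r = i := by
          rw [Equiv.Perm.inv_eq_iff_eq]
          exact hω'.symm
        have hup : Function.update ω' k₀ (ω' k₀ * Equiv.swap i j) k₀
            = ω' k₀ * Equiv.swap i j := Function.update_self _ _ _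
        have hinv : (Function.update ω' k₀ (ω' k₀ * Equiv.swap i j) k₀)⁻¹ r = j := by
          rw [hup, mul_inv_rev, Equiv.Perm.mul_apply, Equiv.swap_inv, hω'i,
            Equiv.swap_apply_left]
        refine Prod.ext hinv (Subtype.ext ?_)
        show T _ = ω'
        rw [hT]
        simp only
        rw [hinv, hup, Function.update_idem, mul_assoc, Equiv.swap_mul_self, mul_one,
          Function.update_eq_self] } with he
  have hmapT : (unifMeasure (Fin K → Equiv.Perm (Fin n))).map T
      = ProbabilityTheory.cond (unifMeasure (Fin K → Equiv.Perm (Fin n))) s :=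
    map_unif_eq_cond hall T s n hn e (fun ω => rfl)
  -- pointwise coupling bound along trajectories
  have hptw : ∀ ω, ‖X ω - X (T ω)‖ ≤ 2 * α * G := by
    intro ω
    set j : Fin n := (ω k₀)⁻¹ r with hj
    have hagree : ∀ j', j' ≠ k - 1 → extendPerm ω j' = extendPerm (T ω) j' := by
      intro j' hj'
      by_cases hlt : j' < K
      · show (if h : j' < K then ω ⟨j', h⟩ else 1) = (if h : j' < K then T ω ⟨j', h⟩ else 1)
        rw [dif_pos hlt, dif_pos hlt]
        have hne : (⟨j', hlt⟩ : Fin K) ≠ k₀ := by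
          intro hEq
          exact hj' (congrArg Fin.val hEq)
        rw [hT]
        simp only
        rw [Function.update_of_ne hne]
      · show (if h : j' < K then ω ⟨j', h⟩ else 1) = (if h : j' < K then T ω ⟨j', h⟩ else 1)
        rw [dif_neg hlt, dif_neg hlt]
    have hσ' : extendPerm (T ω) (k - 1) = extendPerm ω (k - 1) * Equiv.swap i j := by
      show (if h : k - 1 < K then T ω ⟨k - 1, h⟩ else 1)
          = (if h : k - 1 < K then ω ⟨k - 1, h⟩ else 1) * Equiv.swap i j
      rw [dif_pos hkK', dif_pos hkK']
      exact hTk₀ ω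
    have := (sgdo_epoch_coupling hn f G L α x0 hα hα2 hL hG hdiff hconv hGlip hLsmooth
      (extendPerm ω) (extendPerm (T ω)) (k - 1) hagree i j hσ' (i : ℕ) le_rfl).1
    exact this
  -- the coupling measure
  set μ0 : Measure (Vec d × Vec d) :=
    (unifMeasure (Fin K → Equiv.Perm (Fin n))).map (fun ω => (X ω, X (T ω))) with hμ0
  have hpairm : Measurable (fun ω : Fin K → Equiv.Perm (Fin n) => (X ω, X (T ω))) :=
    fun _ _ => hall _
  have h0 : IsProbabilityMeasure μ0 := Measure.isProbabilityMeasure_map hpairm.aemeasurable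
  have hm1 : μ0.map Prod.fst = (unifMeasure (Fin K → Equiv.Perm (Fin n))).map X := by
    rw [hμ0, Measure.map_map measurable_fst hpairm]
    rfl
  have hm2 : μ0.map Prod.snd = (ProbabilityTheory.cond
      (unifMeasure (Fin K → Equiv.Perm (Fin n))) s).map X := by
    rw [hμ0, Measure.map_map measurable_snd hpairm]
    have hcomp : (Prod.snd ∘ fun ω : Fin K → Equiv.Perm (Fin n) => (X ω, X (T ω))) = X ∘ T :=
      rfl
    rw [hcomp, ← Measure.map_map hXm hTm, hmapT]
  -- finite support
  set F : Set (Vec d) := Set.range X with hF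
  have hFfin : F.Finite := Set.finite_range X
  have hpre : X ⁻¹' Fᶜ = ∅ := by
    ext ω
    simp [hF]
  have hPF : ((unifMeasure (Fin K → Equiv.Perm (Fin n))).map X) Fᶜ = 0 := by
    rw [Measure.map_apply hXm hFfin.measurableSet.compl, hpre, measure_empty]
  have hQF : ((ProbabilityTheory.cond (unifMeasure (Fin K → Equiv.Perm (Fin n))) s).map X)
      Fᶜ = 0 := by
    rw [Measure.map_apply hXm hFfin.measurableSet.compl, hpre, measure_empty]
  -- a.e. bound on the coupling
  have hset : MeasurableSet {p : Vec d × Vec d | ‖p.1 - p.2‖ ≤ 2 * α * G} :=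
    measurableSet_le ((continuous_fst.sub continuous_snd).norm.measurable) measurable_const
  have hbd : ∀ᵐ p ∂μ0, ‖p.1 - p.2‖ ≤ 2 * α * G := by
    rw [hμ0, MeasureTheory.ae_map_iff hpairm.aemeasurable hset]
    exact MeasureTheory.ae_of_all _ hptw
  have hmain := wasserstein_bounds
    ((unifMeasure (Fin K → Equiv.Perm (Fin n))).map X)
    ((ProbabilityTheory.cond (unifMeasure (Fin K → Equiv.Perm (Fin n))) s).map X)
    F hFfin hPF hQF μ0 h0 hm1 hm2 (2 * α * G) (by positivity) hbd
  rw [hsrw]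
  exact hmain

end
end
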